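/- arXiv:2008.05193 — 2 statements merged into one kernel-verified Lean document; each statement's English description precedes it below -/
import Mathlib

section
/- Let Ω be a measurable space carrying two finite measures μ₊ and μ₋, let S₊, S₋ : ℝ → Ω → Ω be families of measurable maps, and let T : Ω → Ω be measurable with T ∘ T = id, with the pushforward of μ₋ under T equal to μ₊, and with T ∘ S₊(t) = S₋(−t) ∘ T for all t ∈ ℝ. Let φ, ψ : Ω → ℝ be bounded measurable functions and η_φ, η_ψ ∈ {1,−1} with φ ∘ T = η_φ·φ and ψ ∘ T = η_ψ·ψ. Then for every t ∈ ℝ, ∫_Ω φ(x)·ψ(S₊(t)x) dμ₊(x) = η_φ·η_ψ·∫_Ω φ(x)·ψ(S₋(−t)x) dμ₋(x). -/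
open MeasureTheory

/-- Kubo's relation `⟨φ(0)ψ(t)⟩_B = η_φ η_ψ ⟨φ(0)ψ(-t)⟩_{-B}`: a measurable
involution `T` carrying the equilibrium measure of the reversed-field system to
that of the original system and intertwining the two dynamics relates the two
correlation functions. -/
theorem kubo_relation_two_systems
    {Ω : Type*} [MeasurableSpace Ω]
    (μp μm : Measure Ω) [IsFiniteMeasure μp] [IsFiniteMeasure μm]
    (Sp Sm : ℝ → Ω → Ω) (hSp : ∀ t, Measurable (Sp t)) (hSm : ∀ t, Measurable (Sm t))
    (T : Ω → Ω) (hTmeas : Measurable T) (hTinv : T ∘ T = id)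
    (hTμ : Measure.map T μm = μp)
    (hTS : ∀ t, T ∘ Sp t = Sm (-t) ∘ T)
    (φ ψ : Ω → ℝ) (hφ : Measurable φ) (hψ : Measurable ψ)
    (hφb : ∃ C, ∀ x, |φ x| ≤ C) (hψb : ∃ C, ∀ x, |ψ x| ≤ C)
    (ηφ ηψ : ℝ) (hηφ : ηφ = 1 ∨ ηφ = -1) (hηψ : ηψ = 1 ∨ ηψ = -1)
    (hφT : ∀ x, φ (T x) = ηφ * φ x) (hψT : ∀ x, ψ (T x) = ηψ * ψ x) :
    ∀ t : ℝ, ∫ x, φ x * ψ (Sp t x) ∂μp = ηφ * ηψ * ∫ x, φ x * ψ (Sm (-t) x) ∂μm := by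
  intro t
  have hTT : ∀ x, T (T x) = x := fun x => congrFun hTinv x
  have hψsq : ηψ * ηψ = 1 := by rcases hηψ with h | h <;> simp [h]
  have hkey : ∀ x, φ (T x) * ψ (Sp t (T x)) = ηφ * ηψ * (φ x * ψ (Sm (-t) x)) := by
    intro x
    have h1 : T (Sp t (T x)) = Sm (-t) x := by
      have := congrFun (hTS t) (T x)
      simpa [Function.comp, hTT] using this
    have h2 : ψ (Sm (-t) x) = ηψ * ψ (Sp t (T x)) := by
      rw [← h1, hψT]
    have h3 : ψ (Sp t (T x)) = ηψ * ψ (Sm (-t) x) := by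
      rw [h2, ← mul_assoc, hψsq, one_mul]
    rw [hφT, h3]; ring
  have hmeas : AEStronglyMeasurable (fun x => φ x * ψ (Sp t x)) μp :=
    (hφ.mul (hψ.comp (hSp t))).aestronglyMeasurable
  calc ∫ x, φ x * ψ (Sp t x) ∂μp
      = ∫ x, φ (T x) * ψ (Sp t (T x)) ∂μm := by
        rw [← hTμ, integral_map hTmeas.aemeasurable (by rw [hTμ]; exact hmeas)]
    _ = ∫ x, ηφ * ηψ * (φ x * ψ (Sm (-t) x)) ∂μm := by
        simp only [hkey]
    _ = ηφ * ηψ * ∫ x, φ x * ψ (Sm (-t) x) ∂μm := integral_const_mul _ _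
end

section
/- Let B₀ ∈ ℝ with B₀ ≠ 0 and let b = (0,0,B₀) ∈ ℝ³ be a constant magnetic field along the z axis. Then among the involutory 3×3 signed permutation matrices M, exactly 8 satisfy det(M) · (M·b) = −b; namely the 4 diagonal matrices diag(s₁,s₂,s₃) with s₁s₂ = −1, and the 4 matrices with M₁₂ = M₂₁ = s_P, M₃₃ = s₃, s_P, s₃ ∈ {1,−1}. -/
/-!
Write a signed permutation matrix as `M i j = if j = σ i then s i else 0`. Since `b` is a multiple
of `Pi.single 2 1`, the condition `det M • M b = -b` only sees the third column of `M`, whose single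
nonzero entry sits in row `σ⁻¹ 2`; so it forces `σ 2 = 2` and `det M * s 2 = -1`, i.e.
`sign σ * s 0 * s 1 = -1`. The permutations of `Fin 3` fixing `2` are the identity, giving the
diagonal matrices with `s 0 * s 1 = -1`, and the transposition of `0` and `1`, giving
`s 0 = s 1`. Both families are involutions automatically, and each is parametrised injectively
by two signs, whence `4 + 4` matrices.
-/

/-- A 3×3 signed permutation matrix: exactly one nonzero entry in each row
and each column, and each nonzero entry equals `1` or `-1`. -/
def IsSignedPermMatrix (M : Matrix (Fin 3) (Fin 3) ℝ) : Prop :=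
  (∀ i, ∃! j, M i j ≠ 0) ∧ (∀ j, ∃! i, M i j ≠ 0) ∧
    (∀ i j, M i j ≠ 0 → M i j = 1 ∨ M i j = -1)

open Matrix

section SignedPermMatrix

variable {n R : Type*} [DecidableEq n] [CommRing R]

def signedPermMatrix (σ : Equiv.Perm n) (s : n → R) : Matrix n n R :=
  of fun i j => if j = σ i then s i else 0

theorem signedPermMatrix_apply (σ : Equiv.Perm n) (s : n → R) (i j : n) :
    signedPermMatrix σ s i j = if j = σ i then s i else 0 :=
  rfl

theorem signedPermMatrix_one (s : n → R) : signedPermMatrix 1 s = diagonal s := by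
  ext i j
  simp [signedPermMatrix_apply, diagonal_apply, eq_comm]

theorem signedPermMatrix_eq_diagonal_mul_permMatrix [Fintype n] (σ : Equiv.Perm n) (s : n → R) :
    signedPermMatrix σ s = diagonal s * σ.permMatrix R := by
  ext i j
  simp [signedPermMatrix_apply, diagonal_mul, Equiv.Perm.permMatrix, PEquiv.toMatrix_apply,
    eq_comm]

theorem det_signedPermMatrix [Fintype n] (σ : Equiv.Perm n) (s : n → R) :
    (signedPermMatrix σ s).det = Equiv.Perm.sign σ * ∏ i, s i := by
  rw [signedPermMatrix_eq_diagonal_mul_permMatrix, det_mul, det_diagonal, det_permutation,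
    mul_comm]

theorem signedPermMatrix_mul [Fintype n] (σ τ : Equiv.Perm n) (s t : n → R) :
    signedPermMatrix σ s * signedPermMatrix τ t =
      signedPermMatrix (τ * σ) fun i => s i * t (σ i) := by
  ext i k
  rw [signedPermMatrix_apply _ _ i k, Equiv.Perm.mul_apply, mul_apply]
  simp only [signedPermMatrix_apply, ite_mul, zero_mul]
  simp [mul_ite]

theorem signedPermMatrix_mul_self [Fintype n] {σ : Equiv.Perm n} {s : n → R} (hσ : σ * σ = 1)
    (hs : ∀ i, s i * s (σ i) = 1) : signedPermMatrix σ s * signedPermMatrix σ s = 1 := by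
  rw [signedPermMatrix_mul, hσ, signedPermMatrix_one, funext hs, diagonal_one]

theorem smul_signedPermMatrix_mulVec_single_eq_neg_iff [Fintype n] [NoZeroDivisors R]
    {σ : Equiv.Perm n} {s : n → R} {d c : R} (hc : c ≠ 0) (j : n) :
    d • (signedPermMatrix σ s *ᵥ Pi.single j c) = -Pi.single j c ↔ σ j = j ∧ d * s j = -1 := by
  have hcol : ∀ i, (d • (signedPermMatrix σ s *ᵥ Pi.single j c)) i =
      if σ i = j then d * s i * c else 0 := by
    intro i
    simp [mulVec_single, signedPermMatrix_apply, eq_comm, mul_assoc, mul_comm c]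
  constructor
  · intro h
    have hj := hcol j
    rw [h] at hj
    by_cases hσ : σ j = j
    · rw [if_pos hσ] at hj
      refine ⟨hσ, mul_right_cancel₀ hc ?_⟩
      simpa [eq_comm] using hj
    · simp [if_neg hσ, hc] at hj
  · rintro ⟨hσ, hds⟩
    ext i
    rw [hcol]
    by_cases hi : i = j
    · subst hi
      simp [hσ, hds]
    · have : σ i ≠ j := fun h => hi (σ.injective (h.trans hσ.symm))
      simp [this, hi]

end SignedPermMatrix

theorem isSignedPermMatrix_iff {M : Matrix (Fin 3) (Fin 3) ℝ} :
    IsSignedPermMatrix M ↔ ∃ σ : Equiv.Perm (Fin 3), ∃ s : Fin 3 → ℝ,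
      (∀ i, s i = 1 ∨ s i = -1) ∧ M = signedPermMatrix σ s := by
  constructor
  · rintro ⟨hrow, hcol, hval⟩
    choose f hf hf_unique using hrow
    have hf_inj : Function.Injective f := fun i i' he =>
      (hcol (f i)).unique (hf i) (he ▸ hf i')
    refine ⟨Equiv.ofBijective f hf_inj.bijective_of_finite, fun i => M i (f i),
      fun i => hval i (f i) (hf i), ?_⟩
    ext i j
    rw [signedPermMatrix_apply, Equiv.ofBijective_apply]
    split_ifs with hj
    · rw [hj]
    · exact not_not.mp (mt (hf_unique i j) hj)
  · rintro ⟨σ, s, hs, rfl⟩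
    have hs0 : ∀ i, s i ≠ 0 := fun i => by rcases hs i with h | h <;> norm_num [h]
    refine ⟨fun i => ⟨σ i, by simp [signedPermMatrix_apply, hs0], fun j hj => ?_⟩,
      fun j => ⟨σ.symm j, by simp [signedPermMatrix_apply, hs0], fun i hi => ?_⟩,
      fun i j hij => ?_⟩
    · by_contra hne
      exact hj (if_neg hne)
    · by_contra hne
      exact hi (if_neg fun h => hne (σ.symm_apply_eq.mpr h).symm)
    · rw [signedPermMatrix_apply] at hij ⊢
      split_ifs at hij ⊢
      · exact hs i
      · exact absurd rfl hij

theorem Equiv.Perm.eq_one_or_eq_swap_of_apply_two {σ : Equiv.Perm (Fin 3)} (hσ : σ 2 = 2) :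
    σ = 1 ∨ σ = Equiv.swap 0 1 := by
  revert σ
  decide

theorem signedPermMatrix_swap_zero_one {R : Type*} [CommRing R] (s : Fin 3 → R) :
    signedPermMatrix (Equiv.swap 0 1) s = !![0, s 0, 0; s 1, 0, 0; 0, 0, s 2] := by
  ext i j
  fin_cases i <;> fin_cases j <;> rfl

theorem vecCons_zero_zero_eq_single {R : Type*} [Zero R] (c : R) :
    ![0, 0, c] = Pi.single 2 c := by
  ext i
  fin_cases i <;> rfl

theorem det_smul_signedPermMatrix_mulVec_single_two_eq_neg_iff {B₀ : ℝ} (hB₀ : B₀ ≠ 0)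
    {σ : Equiv.Perm (Fin 3)} {s : Fin 3 → ℝ} (hs : ∀ i, s i = 1 ∨ s i = -1) :
    (signedPermMatrix σ s).det • (signedPermMatrix σ s *ᵥ Pi.single 2 B₀) = -Pi.single 2 B₀ ↔
      σ 2 = 2 ∧ Equiv.Perm.sign σ * (s 0 * s 1) = -1 := by
  have hs2 : ∀ a : ℝ, a * (s 0 * s 1 * s 2) * s 2 = a * (s 0 * s 1) := fun a => by
    linear_combination a * s 0 * s 1 * mul_self_eq_one_iff.mpr (hs 2)
  rw [smul_signedPermMatrix_mulVec_single_eq_neg_iff hB₀, det_signedPermMatrix,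
    Fin.prod_univ_three, hs2]

def timeReversalOps (b : Fin 3 → ℝ) : Set (Matrix (Fin 3) (Fin 3) ℝ) :=
  {M | IsSignedPermMatrix M ∧ M * M = 1 ∧ M.det • M *ᵥ b = -b}

def diagonalTimeReversalOps : Set (Matrix (Fin 3) (Fin 3) ℝ) :=
  {M | ∃ s₁ s₂ s₃ : ℝ, (s₁ = 1 ∨ s₁ = -1) ∧ (s₂ = 1 ∨ s₂ = -1) ∧
    (s₃ = 1 ∨ s₃ = -1) ∧ s₁ * s₂ = -1 ∧ M = diagonal ![s₁, s₂, s₃]}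

def swapTimeReversalOps : Set (Matrix (Fin 3) (Fin 3) ℝ) :=
  {M | ∃ sP s₃ : ℝ, (sP = 1 ∨ sP = -1) ∧ (s₃ = 1 ∨ s₃ = -1) ∧
    M = !![0, sP, 0; sP, 0, 0; 0, 0, s₃]}

theorem timeReversalOps_subset {B₀ : ℝ} (hB₀ : B₀ ≠ 0) :
    timeReversalOps (Pi.single 2 B₀) ⊆ diagonalTimeReversalOps ∪ swapTimeReversalOps := by
  rintro _ ⟨hM, -, hb⟩
  obtain ⟨σ, s, hs, rfl⟩ := isSignedPermMatrix_iff.mp hM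
  obtain ⟨hσ, hsign⟩ := (det_smul_signedPermMatrix_mulVec_single_two_eq_neg_iff hB₀ hs).mp hb
  rcases Equiv.Perm.eq_one_or_eq_swap_of_apply_two hσ with rfl | rfl
  · refine Or.inl ⟨s 0, s 1, s 2, hs 0, hs 1, hs 2, by simpa using hsign, ?_⟩
    rw [signedPermMatrix_one]
    congr
    ext i
    fin_cases i <;> rfl
  · have hs01 : s 0 * s 1 = 1 := by simpa [Equiv.Perm.sign_swap] using hsign
    have hs10 : s 1 = s 0 := by
      linear_combination s 0 * hs01 - s 1 * mul_self_eq_one_iff.mpr (hs 0)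
    refine Or.inr ⟨s 0, s 2, hs 0, hs 2, ?_⟩
    rw [signedPermMatrix_swap_zero_one, hs10]

theorem diagonalTimeReversalOps_subset {B₀ : ℝ} (hB₀ : B₀ ≠ 0) :
    diagonalTimeReversalOps ⊆ timeReversalOps (Pi.single 2 B₀) := by
  rintro _ ⟨s₁, s₂, s₃, h₁, h₂, h₃, h₁₂, rfl⟩
  have hs : ∀ i, ![s₁, s₂, s₃] i = 1 ∨ ![s₁, s₂, s₃] i = -1 := by
    intro i
    fin_cases i <;> assumption
  rw [← signedPermMatrix_one]
  exact ⟨isSignedPermMatrix_iff.mpr ⟨1, _, hs, rfl⟩,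
    signedPermMatrix_mul_self (mul_one 1) fun i => mul_self_eq_one_iff.mpr (hs i),
    (det_smul_signedPermMatrix_mulVec_single_two_eq_neg_iff hB₀ hs).mpr
      ⟨rfl, by simpa using h₁₂⟩⟩

theorem swapTimeReversalOps_subset {B₀ : ℝ} (hB₀ : B₀ ≠ 0) :
    swapTimeReversalOps ⊆ timeReversalOps (Pi.single 2 B₀) := by
  rintro _ ⟨sP, s₃, hP, h₃, rfl⟩
  have hs : ∀ i, ![sP, sP, s₃] i = 1 ∨ ![sP, sP, s₃] i = -1 := by
    intro i
    fin_cases i <;> assumption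
  have hM : !![0, sP, 0; sP, 0, 0; 0, 0, s₃] =
      signedPermMatrix (Equiv.swap 0 1) ![sP, sP, s₃] := by
    rw [signedPermMatrix_swap_zero_one]
    rfl
  rw [hM]
  refine ⟨isSignedPermMatrix_iff.mpr ⟨_, _, hs, rfl⟩,
    signedPermMatrix_mul_self (Equiv.swap_mul_self 0 1) fun i => ?_,
    (det_smul_signedPermMatrix_mulVec_single_two_eq_neg_iff hB₀ hs).mpr ⟨rfl, ?_⟩⟩
  · fin_cases i <;> simp [Equiv.swap_apply_of_ne_of_ne, mul_self_eq_one_iff, hP, h₃]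
  · simp [mul_self_eq_one_iff, hP]

theorem timeReversalOps_eq {B₀ : ℝ} (hB₀ : B₀ ≠ 0) :
    timeReversalOps ![0, 0, B₀] = diagonalTimeReversalOps ∪ swapTimeReversalOps := by
  rw [vecCons_zero_zero_eq_single]
  exact (timeReversalOps_subset hB₀).antisymm
    (Set.union_subset (diagonalTimeReversalOps_subset hB₀) (swapTimeReversalOps_subset hB₀))

theorem diagonalTimeReversalOps_eq_image :
    diagonalTimeReversalOps =
      (fun p : ℝ × ℝ => diagonal ![p.1, -p.1, p.2]) '' ({1, -1} ×ˢ {1, -1}) := by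
  ext M
  simp only [diagonalTimeReversalOps, Set.mem_ofPred_eq, Set.mem_image, Set.mem_prod,
    Set.mem_insert_iff, Set.mem_singleton_iff, Prod.exists]
  constructor
  · rintro ⟨s₁, s₂, s₃, h₁, -, h₃, h₁₂, rfl⟩
    have hs₂ : s₂ = -s₁ := by
      linear_combination s₁ * h₁₂ - s₂ * mul_self_eq_one_iff.mpr h₁
    exact ⟨s₁, s₃, ⟨h₁, h₃⟩, by rw [hs₂]⟩
  · rintro ⟨s₁, s₃, ⟨h₁, h₃⟩, rfl⟩
    exact ⟨s₁, -s₁, s₃, h₁, by rcases h₁ with rfl | rfl <;> norm_num, h₃,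
      by linear_combination -mul_self_eq_one_iff.mpr h₁, rfl⟩

theorem swapTimeReversalOps_eq_image :
    swapTimeReversalOps =
      (fun p : ℝ × ℝ => !![0, p.1, 0; p.1, 0, 0; 0, 0, p.2]) '' ({1, -1} ×ˢ {1, -1}) := by
  ext M
  simp only [swapTimeReversalOps, Set.mem_ofPred_eq, Set.mem_image, Set.mem_prod,
    Set.mem_insert_iff, Set.mem_singleton_iff, Prod.exists]
  constructor
  · rintro ⟨sP, s₃, hP, h₃, rfl⟩
    exact ⟨sP, s₃, ⟨hP, h₃⟩, rfl⟩
  · rintro ⟨sP, s₃, ⟨hP, h₃⟩, rfl⟩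
    exact ⟨sP, s₃, hP, h₃, rfl⟩

theorem ncard_diagonalTimeReversalOps_union_swapTimeReversalOps :
    (diagonalTimeReversalOps ∪ swapTimeReversalOps).ncard = 8 := by
  have hsigns : ({1, -1} : Set ℝ).ncard = 2 := Set.ncard_pair (by norm_num)
  have hdiag_inj : Function.Injective fun p : ℝ × ℝ => diagonal ![p.1, -p.1, p.2] := by
    intro p q h
    have h00 := congrFun₂ h 0 0
    have h22 := congrFun₂ h 2 2
    simp only [diagonal_apply_eq] at h00 h22
    exact Prod.ext h00 h22
  have hswap_inj : Function.Injective fun p : ℝ × ℝ => !![0, p.1, 0; p.1, 0, 0; 0, 0, p.2] :=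
    fun p q h => Prod.ext (congrFun₂ h 0 1) (congrFun₂ h 2 2)
  rw [diagonalTimeReversalOps_eq_image, swapTimeReversalOps_eq_image,
    Set.ncard_union_eq ?_ ((Set.toFinite _).image _) ((Set.toFinite _).image _),
    Set.ncard_image_of_injective _ hdiag_inj, Set.ncard_image_of_injective _ hswap_inj,
    Set.ncard_prod, hsigns]
  rw [Set.disjoint_left]
  rintro _ ⟨p, ⟨hp, -⟩, rfl⟩ ⟨q, -, hq⟩
  have h00 := congrFun₂ hq 0 0
  simp only [diagonal_apply_eq] at h00
  obtain hp | hp : p.1 = 1 ∨ p.1 = -1 := hp <;> norm_num [hp] at h00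

/-- For a constant magnetic field `b = (0,0,B₀)` along the `z` axis, exactly 8
involutory signed permutation matrices satisfy the pseudo-vector condition
`det(M)·(M·b) = -b`: the 4 diagonal ones with `s₁s₂ = -1` and the 4 swapping
the `x` and `y` coordinates. -/
theorem constant_field_eight_time_reversal_operations
    (B₀ : ℝ) (hB₀ : B₀ ≠ 0) (b : Fin 3 → ℝ) (hb : b = ![0, 0, B₀]) :
    {M : Matrix (Fin 3) (Fin 3) ℝ |
        IsSignedPermMatrix M ∧ M * M = 1 ∧ M.det • M.mulVec b = -b} =
      ({M | ∃ s₁ s₂ s₃ : ℝ, (s₁ = 1 ∨ s₁ = -1) ∧ (s₂ = 1 ∨ s₂ = -1) ∧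
          (s₃ = 1 ∨ s₃ = -1) ∧ s₁ * s₂ = -1 ∧ M = Matrix.diagonal ![s₁, s₂, s₃]} ∪
        {M | ∃ sP s₃ : ℝ, (sP = 1 ∨ sP = -1) ∧ (s₃ = 1 ∨ s₃ = -1) ∧
          M = !![0, sP, 0; sP, 0, 0; 0, 0, s₃]}) ∧
    {M : Matrix (Fin 3) (Fin 3) ℝ |
        IsSignedPermMatrix M ∧ M * M = 1 ∧ M.det • M.mulVec b = -b}.ncard = 8 := by
  subst hb
  change timeReversalOps ![0, 0, B₀] = diagonalTimeReversalOps ∪ swapTimeReversalOps ∧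
    (timeReversalOps ![0, 0, B₀]).ncard = 8
  rw [timeReversalOps_eq hB₀]
  exact ⟨rfl, ncard_diagonalTimeReversalOps_union_swapTimeReversalOps⟩
end
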